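/- Let m, h > 0 and let V : ℝ → ℝ be differentiable. Suppose real numbers q_{j−1}, q_{j−1+ξ}, q_{j−ξ}, q_j and q_j, q_{j+ξ}, q_{j+1−ξ}, q_{j+1} each satisfy the internal equations of the nonlinear Lobatto scheme on their respective intervals. Then the border Euler–Lagrange equation ∂L_d/∂q_r(q_{j−1}, q_{j−1+ξ}, q_{j−ξ}, q_j) + ∂L_d/∂q_ℓ(q_j, q_{j+ξ}, q_{j+1−ξ}, q_{j+1}) = 0 holds if and only if (1/h²)(q_{j−1} − 2q_j + q_{j+1}) + (1/(24m))[(5−√5)V′(q_{j−1+ξ}) + (5+√5)V′(q_{j−ξ}) + 4V′(q_j) + (5+√5)V′(q_{j+ξ}) + (5−√5)V′(q_{j+1−ξ})] = 0. -/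

import Mathlib

/-- The nonlinear discrete Lagrangian with mass `m`, time step `h` and potential `V`. -/
noncomputable def LdNL (m h : ℝ) (V : ℝ → ℝ) (qℓ qξ q1mξ qr : ℝ) : ℝ :=
  (m / (12 * h)) *
    (26 * (qℓ^2 + qr^2) - 2 * qℓ * qr + 50 * (qξ^2 - qξ * q1mξ + q1mξ^2)
      - 25 * (qℓ + qr) * (qξ + q1mξ)
      - 15 * Real.sqrt 5 * (qℓ - qr) * (qξ - q1mξ))
  - (h/12) * (V qℓ + 5 * (V qξ + V q1mξ) + V qr)

/-!
Each endpoint partial derivative of `LdNL` is affine in the two internal values, and only through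
the combinations `-25 (q_ξ + q_{1-ξ}) ± 15√5 (q_ξ - q_{1-ξ})`. The internal equations express
exactly these combinations through the endpoints and `V'` at the internal values, which turns
the partials into discrete momenta `±(m/h)(q_r - q_ℓ) - (h/24)(…) - (h/12) V'(q)`. Adding the
right momentum of one interval to the left momentum of the next gives `-m h` times the
three-point expression.
-/

section
variable {m h : ℝ} {V : ℝ → ℝ} {qℓ qξ q1mξ qr v : ℝ}

theorem hasDerivAt_LdNL_right (hV : HasDerivAt V v qr) :
    HasDerivAt (fun x => LdNL m h V qℓ qξ q1mξ x)
      (m / (12 * h) * (52 * qr - 2 * qℓ - 25 * (qξ + q1mξ) + 15 * √5 * (qξ - q1mξ))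
        - h / 12 * v) qr := by
  have hx := hasDerivAt_id' qr
  have hkinetic :=
    (((((hx.pow 2).const_add (qℓ ^ 2)).const_mul 26).sub (hx.const_mul (2 * qℓ))).add
      (hasDerivAt_const qr (50 * (qξ ^ 2 - qξ * q1mξ + q1mξ ^ 2)))).sub
      (((hx.const_add qℓ).const_mul 25).mul_const (qξ + q1mξ)) |>.sub
      (((hx.const_sub qℓ).const_mul (15 * √5)).mul_const (qξ - q1mξ))
  have hpotential := (hV.const_add (V qℓ + 5 * (V qξ + V q1mξ))).const_mul (h / 12)
  refine ((hkinetic.const_mul (m / (12 * h))).sub hpotential).congr_deriv ?_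
  norm_num only
  ring

theorem hasDerivAt_LdNL_left (hV : HasDerivAt V v qℓ) :
    HasDerivAt (fun x => LdNL m h V x qξ q1mξ qr)
      (m / (12 * h) * (52 * qℓ - 2 * qr - 25 * (qξ + q1mξ) - 15 * √5 * (qξ - q1mξ))
        - h / 12 * v) qℓ := by
  have hx := hasDerivAt_id' qℓ
  have hkinetic :=
    (((((hx.pow 2).add_const (qr ^ 2)).const_mul 26).sub ((hx.const_mul 2).mul_const qr)).add
      (hasDerivAt_const qℓ (50 * (qξ ^ 2 - qξ * q1mξ + q1mξ ^ 2)))).sub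
      (((hx.add_const qr).const_mul 25).mul_const (qξ + q1mξ)) |>.sub
      (((hx.sub_const qr).const_mul (15 * √5)).mul_const (qξ - q1mξ))
  have hpotential := ((hV.add_const (5 * (V qξ + V q1mξ))).add_const (V qr)).const_mul (h / 12)
  refine ((hkinetic.const_mul (m / (12 * h))).sub hpotential).congr_deriv ?_
  norm_num only
  ring

structure LobattoInternal (m h : ℝ) (V : ℝ → ℝ) (qℓ qξ q1mξ qr : ℝ) : Prop where
  stage_ξ : qξ - (h^2/(30*m)) * (deriv V q1mξ + 2 * deriv V qξ)
    = ((5 + √5)/10) * qℓ + ((5 - √5)/10) * qr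
  stage_one_sub_ξ : q1mξ - (h^2/(30*m)) * (2 * deriv V q1mξ + deriv V qξ)
    = ((5 - √5)/10) * qℓ + ((5 + √5)/10) * qr

namespace LobattoInternal

theorem stages_combination_right (hint : LobattoInternal m h V qℓ qξ q1mξ qr) :
    -25 * (qξ + q1mξ) + 15 * √5 * (qξ - q1mξ)
      = -10 * qℓ - 40 * qr - h^2 / (2*m) * ((5 - √5) * deriv V qξ + (5 + √5) * deriv V q1mξ) := by
  linear_combination (-25 + 15 * √5) * hint.stage_ξ + (-25 - 15 * √5) * hint.stage_one_sub_ξ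
    + 3 * (qℓ - qr) * Real.sq_sqrt (show (0:ℝ) ≤ 5 by norm_num)

theorem stages_combination_left (hint : LobattoInternal m h V qℓ qξ q1mξ qr) :
    -25 * (qξ + q1mξ) - 15 * √5 * (qξ - q1mξ)
      = -40 * qℓ - 10 * qr - h^2 / (2*m) * ((5 + √5) * deriv V qξ + (5 - √5) * deriv V q1mξ) := by
  linear_combination (-25 - 15 * √5) * hint.stage_ξ + (-25 + 15 * √5) * hint.stage_one_sub_ξ
    + 3 * (qr - qℓ) * Real.sq_sqrt (show (0:ℝ) ≤ 5 by norm_num)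

theorem deriv_LdNL_right (hint : LobattoInternal m h V qℓ qξ q1mξ qr) (hm : m ≠ 0) (hh : h ≠ 0)
    (hV : DifferentiableAt ℝ V qr) :
    deriv (fun x => LdNL m h V qℓ qξ q1mξ x) qr
      = m / h * (qr - qℓ) - h / 24 * ((5 - √5) * deriv V qξ + (5 + √5) * deriv V q1mξ)
        - h / 12 * deriv V qr := by
  rw [(hasDerivAt_LdNL_right hV.hasDerivAt).deriv]
  linear_combination (norm := (field_simp; ring)) m / (12 * h) * hint.stages_combination_right

theorem deriv_LdNL_left (hint : LobattoInternal m h V qℓ qξ q1mξ qr) (hm : m ≠ 0) (hh : h ≠ 0)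
    (hV : DifferentiableAt ℝ V qℓ) :
    deriv (fun x => LdNL m h V x qξ q1mξ qr) qℓ
      = m / h * (qℓ - qr) - h / 24 * ((5 + √5) * deriv V qξ + (5 - √5) * deriv V q1mξ)
        - h / 12 * deriv V qℓ := by
  rw [(hasDerivAt_LdNL_left hV.hasDerivAt).deriv]
  linear_combination (norm := (field_simp; ring)) m / (12 * h) * hint.stages_combination_left

end LobattoInternal
end

/-- Under the internal equations of the nonlinear Lobatto scheme on the two adjacent
intervals, the border Euler–Lagrange equation is equivalent to the stated explicit
three-point relation. -/
theorem border_EL_nonlinear_iff (m h : ℝ) (hm : 0 < m) (hh : 0 < h)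
    (V : ℝ → ℝ) (hV : Differentiable ℝ V)
    (qjm1 qjm1pξ qjmξ qj qjpξ qjp1mξ qjp1 : ℝ)
    (hint1a : qjm1pξ - (h^2/(30*m)) * (deriv V qjmξ + 2 * deriv V qjm1pξ)
        = ((5 + Real.sqrt 5)/10) * qjm1 + ((5 - Real.sqrt 5)/10) * qj)
    (hint1b : qjmξ - (h^2/(30*m)) * (2 * deriv V qjmξ + deriv V qjm1pξ)
        = ((5 - Real.sqrt 5)/10) * qjm1 + ((5 + Real.sqrt 5)/10) * qj)
    (hint2a : qjpξ - (h^2/(30*m)) * (deriv V qjp1mξ + 2 * deriv V qjpξ)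
        = ((5 + Real.sqrt 5)/10) * qj + ((5 - Real.sqrt 5)/10) * qjp1)
    (hint2b : qjp1mξ - (h^2/(30*m)) * (2 * deriv V qjp1mξ + deriv V qjpξ)
        = ((5 - Real.sqrt 5)/10) * qj + ((5 + Real.sqrt 5)/10) * qjp1) :
    deriv (fun x => LdNL m h V qjm1 qjm1pξ qjmξ x) qj
        + deriv (fun x => LdNL m h V x qjpξ qjp1mξ qjp1) qj = 0
    ↔ (1/h^2) * (qjm1 - 2 * qj + qjp1)
        + (1/(24*m)) * ((5 - Real.sqrt 5) * deriv V qjm1pξ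
          + (5 + Real.sqrt 5) * deriv V qjmξ
          + 4 * deriv V qj
          + (5 + Real.sqrt 5) * deriv V qjpξ
          + (5 - Real.sqrt 5) * deriv V qjp1mξ) = 0 := by
  have hprev : LobattoInternal m h V qjm1 qjm1pξ qjmξ qj := ⟨hint1a, hint1b⟩
  have hnext : LobattoInternal m h V qj qjpξ qjp1mξ qjp1 := ⟨hint2a, hint2b⟩
  rw [hprev.deriv_LdNL_right hm.ne' hh.ne' (hV qj), hnext.deriv_LdNL_left hm.ne' hh.ne' (hV qj)]
  refine (Eq.congr_left ?_).trans (mul_eq_zero_iff_left (neg_ne_zero.2 (mul_pos hm hh).ne'))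
  field_simp
  ring
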